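/- Every KLM preferential entailment is equal to the MAK entailment defined by a supra classical MAK model: for every KLM model (S, l, ≺), there exists a supra classical MAK model (S, ⊨, ≺) with the same set of states and the same preference relation (namely s ⊨ φ iff φ ∈ l(s)) such that the KLM entailment of the former equals the MAK entailment of the latter. -/
import Mathlib


/-- Formulas of a propositional language over variables `V`. -/
inductive Formula (V : Type) : Type
  | var : V → Formula V
  | neg : Formula V → Formula V
  | and : Formula V → Formula V → Formula V
  | or  : Formula V → Formula V → Formula V
  | imp : Formula V → Formula V → Formula V

/-- Classical satisfaction of a formula by an interpretation `μ ⊆ V`. -/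
def Formula.Sat {V : Type} (μ : Set V) : Formula V → Prop
  | .var v => v ∈ μ
  | .neg φ => ¬ Formula.Sat μ φ
  | .and φ ψ => Formula.Sat μ φ ∧ Formula.Sat μ ψ
  | .or φ ψ => Formula.Sat μ φ ∨ Formula.Sat μ ψ
  | .imp φ ψ => Formula.Sat μ φ → Formula.Sat μ ψ

/-- Classical consequence: every model of `T` satisfies `φ`. -/
def Entails {V : Type} (T : Set (Formula V)) (φ : Formula V) : Prop :=
  ∀ μ : Set V, (∀ ψ ∈ T, Formula.Sat μ ψ) → Formula.Sat μ φ

/-- `Th T` = set of classical consequences of `T`. -/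
def Th {V : Type} (T : Set (Formula V)) : Set (Formula V) :=
  {φ | Entails T φ}

/-- A theory is a deductively closed set of formulas. -/
def IsTheory {V : Type} (T : Set (Formula V)) : Prop :=
  Th T = T

/-- A pre-circumscription: values are theories, it is extensive,
and it respects full logical equivalence. -/
def IsPreCirc {V : Type} (f : Set (Formula V) → Set (Formula V)) : Prop :=
  (∀ T, IsTheory (f T)) ∧ (∀ T, T ⊆ f T) ∧
  (∀ T₁ T₂, Th T₁ = Th T₂ → f T₁ = f T₂)

/-- For a KLM model with labelling `l`, the set `S(T)` of states satisfying `T`. -/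
def klmStates {V σ : Type} (l : σ → Set (Formula V)) (T : Set (Formula V)) : Set σ :=
  {s | Th T ⊆ l s}

/-- The set `S_≺(T)` of `≺`-minimal states among those satisfying `T` (KLM model). -/
def klmMin {V σ : Type} (l : σ → Set (Formula V)) (prec : σ → σ → Prop)
    (T : Set (Formula V)) : Set σ :=
  {s | s ∈ klmStates l T ∧ ∀ s' ∈ klmStates l T, ¬ prec s' s}

/-- The KLM entailment defined by a KLM model `(σ, l, prec)`. -/
def CKLM {V σ : Type} (l : σ → Set (Formula V)) (prec : σ → σ → Prop)
    (T : Set (Formula V)) : Set (Formula V) :=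
  {φ | ∀ s ∈ klmMin l prec T, φ ∈ l s}

/-- Smoothness (stopperedness) of a KLM model. -/
def klmSmooth {V σ : Type} (l : σ → Set (Formula V)) (prec : σ → σ → Prop) : Prop :=
  ∀ T : Set (Formula V), ∀ s ∈ klmStates l T, s ∉ klmMin l prec T →
    ∃ s' ∈ klmMin l prec T, prec s' s

/-- For a MAK model with satisfaction relation `sat`, the set `S(T)` of states
satisfying every formula of `T`. -/
def makStates {V σ : Type} (sat : σ → Formula V → Prop) (T : Set (Formula V)) : Set σ :=
  {s | ∀ φ ∈ T, sat s φ}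

/-- The set `S_≺(T)` of `≺`-minimal states among those satisfying `T` (MAK model). -/
def makMin {V σ : Type} (sat : σ → Formula V → Prop) (prec : σ → σ → Prop)
    (T : Set (Formula V)) : Set σ :=
  {s | s ∈ makStates sat T ∧ ∀ s' ∈ makStates sat T, ¬ prec s' s}

/-- The MAK entailment defined by a MAK model `(σ, sat, prec)`. -/
def CMAK {V σ : Type} (sat : σ → Formula V → Prop) (prec : σ → σ → Prop)
    (T : Set (Formula V)) : Set (Formula V) :=
  {φ | ∀ s ∈ makMin sat prec T, sat s φ}

/-- The (monotonic) Tarski entailment `Cn_⊨` of a MAK model. -/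
def Cn {V σ : Type} (sat : σ → Formula V → Prop) (T : Set (Formula V)) : Set (Formula V) :=
  {φ | ∀ s ∈ makStates sat T, sat s φ}

/-- The set `Cn_⊨(s)` of formulas satisfied by a state `s` of a MAK model. -/
def CnState {V σ : Type} (sat : σ → Formula V → Prop) (s : σ) : Set (Formula V) :=
  {φ | sat s φ}


lemma subset_Th {V : Type} (T : Set (Formula V)) : T ⊆ Th T :=
  fun φ hφ μ hμ => hμ φ hφ

lemma Th_mono {V : Type} {T T' : Set (Formula V)} (h : T ⊆ T') : Th T ⊆ Th T' :=
  fun φ hφ μ hμ => hφ μ (fun ψ hψ => hμ ψ (h hψ))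

lemma cnstate_eq {V σ : Type} (l : σ → Set (Formula V)) (s : σ) :
    CnState (fun s φ => φ ∈ l s) s = l s := rfl

lemma states_eq {V σ : Type} (l : σ → Set (Formula V)) (hl : ∀ s, IsTheory (l s))
    (T : Set (Formula V)) : klmStates l T = makStates (fun s φ => φ ∈ l s) T := by
  ext s
  constructor
  · intro h φ hφ
    exact h (subset_Th T hφ)
  · intro h
    intro φ hφ
    have : Th T ⊆ Th (l s) := Th_mono h
    rw [hl s] at this
    exact this hφ

/-- Every KLM entailment equals the MAK entailment of a supra classical
MAK model with the same states and preference relation, where `s ⊨ φ` iff `φ ∈ l s`. -/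
theorem klm_is_supra_mak {V σ : Type} (l : σ → Set (Formula V)) (prec : σ → σ → Prop)
    (hl : ∀ s : σ, IsTheory (l s)) :
    (∀ s : σ, Th (CnState (fun s φ => φ ∈ l s) s) = CnState (fun s φ => φ ∈ l s) s) ∧
    (∀ T : Set (Formula V), CKLM l prec T = CMAK (fun s φ => φ ∈ l s) prec T) := by
  constructor
  · intro s
    rw [cnstate_eq]
    exact hl s
  · intro T
    have hst := states_eq l hl T
    have hmin : klmMin l prec T = makMin (fun s φ => φ ∈ l s) prec T := by
      unfold klmMin makMin
      rw [hst]
    ext φ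
    unfold CKLM CMAK
    rw [hmin]
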